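/- Let X be a connected graph, I a set, and u a finite dimensional quantum automorphism of the disjoint union ⋃_{i∈I} X (vertices denoted x_i for x ∈ V_X, i ∈ I). Fix x ∈ V_X and define g(u)^I_{ij} = Σ_{v∈V_X} u_{x_i, v_j}. Then: (a) g(u)^I_{ij} is independent of the choice of x; (b) each g(u)^I_{ij} is a projection; (c) (g(u)^I_{ij})_{i,j∈I} is a quantum permutation of I; (d) for all w, y ∈ V_X, u_{w_i, y_j} g(u)^I_{ij} = u_{w_i, y_j} = g(u)^I_{ij} u_{w_i, y_j}. -/

import Mathlib

noncomputable section

def IsProjection {H : Type*} [NormedAddCommGroup H] [InnerProductSpace ℂ H] [CompleteSpace H]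
    (p : H →L[ℂ] H) : Prop :=
  IsIdempotentElem p ∧ IsSelfAdjoint p

def IsQuantumPermutation {X H : Type*} [NormedAddCommGroup H] [InnerProductSpace ℂ H]
    [CompleteSpace H] (u : X → X → H →L[ℂ] H) : Prop :=
  (∀ x y, IsProjection (u x y)) ∧
  (∀ x z z', z ≠ z' → u x z * u x z' = 0) ∧
  (∀ y z z', z ≠ z' → u z y * u z' y = 0) ∧
  (∀ x (ξ : H), HasSum (fun z => u x z ξ) ξ) ∧
  (∀ y (ξ : H), HasSum (fun z => u z y ξ) ξ)

def IsQuantumAut {V H : Type*} [NormedAddCommGroup H] [InnerProductSpace ℂ H]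
    [CompleteSpace H] (G : SimpleGraph V) (u : V → V → H →L[ℂ] H) : Prop :=
  IsQuantumPermutation u ∧
  ∀ x₁ x₂ y₁ y₂, ¬((x₁ = x₂ ↔ y₁ = y₂) ∧ (G.Adj x₁ x₂ ↔ G.Adj y₁ y₂)) →
    u x₁ y₁ * u x₂ y₂ = 0

/-- The disjoint union `⋃_{i ∈ I} X` of copies of a graph `X` indexed by `I`: vertex set
`V_X × I`, with `x_i ∼ y_j` iff `i = j` and `x ∼ y` in `X`. -/
def disjointUnion {V : Type*} (G : SimpleGraph V) (I : Type*) : SimpleGraph (V × I) where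
  Adj a b := a.2 = b.2 ∧ G.Adj a.1 b.1
  symm := ⟨fun a b h => ⟨h.1.symm, h.2.symm⟩⟩
  loopless := ⟨fun a h => G.loopless.irrefl a.1 h.2⟩

/-! Since `H` is finite dimensional, a row of `u` consists of finitely many nonzero orthogonal
projections, so all sums are finite. If `x ∼ x'`, the entry `u (x,i) (v,j)` annihilates every
entry of row `(x',i)` outside the copy `j`, so multiplying it by the row sum `1` of `(x',i)` shows
that it is absorbed by `g` with base point `x'`; together with self-adjointness this gives equality
of the two block sums along every edge, hence everywhere by connectedness. The column properties
of `g` are the row properties of the transposed quantum automorphism, whose block matrix is the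
transpose of `g` because each of the two absorbs the summands of the other. -/

open Function
open scoped InnerProductSpace

theorem IsSelfAdjoint.mul_eq_left_comm {A : Type*} [Mul A] [StarMul A] {p q : A}
    (hp : IsSelfAdjoint p) (hq : IsSelfAdjoint q) (h : p * q = p) : q * p = p := by
  simpa only [star_mul, hp.star_eq, hq.star_eq] using congrArg star h

theorem tsum_prod_mk_left_eq_tsum {V I M : Type*} [AddCommMonoid M] [TopologicalSpace M]
    {f : V × I → M} {j : I} (hf : ∀ b : V × I, b.2 ≠ j → f b = 0) :
    ∑' v, f (v, j) = ∑' b, f b :=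
  (Prod.mk_left_injective j).tsum_eq fun b hb =>
    ⟨b.1, Prod.ext rfl (not_not.1 fun h => hb (hf b (Ne.symm h)))⟩

section TopologicalSemiring

variable {R ι : Type*} [Semiring R] [TopologicalSpace R] [IsTopologicalSemiring R] [T2Space R]
  {p : ι → R}

theorem mul_tsum_eq_self_of_pairwise (hp : ∀ b, IsIdempotentElem (p b))
    (horth : Pairwise fun b c => p b * p c = 0) (hs : Summable p) (b : ι) :
    p b * ∑' c, p c = p b := by
  rw [← hs.tsum_mul_left, tsum_eq_single b fun c hcb => horth hcb.symm, (hp b).eq]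

theorem tsum_mul_tsum_eq_zero {κ : Type*} {q : κ → R} (hp : Summable p)
    (hq : Summable q) (h : ∀ b c, p b * q c = 0) : (∑' b, p b) * ∑' c, q c = 0 := by
  simp only [← hq.tsum_mul_left, ← hp.tsum_mul_right, h, tsum_zero]

end TopologicalSemiring

section ProjectionFamily

variable {H : Type*} [NormedAddCommGroup H] [InnerProductSpace ℂ H] {ι : Type*}

theorem hasSum_of_hasSum_apply {f : ι → H →L[ℂ] H} {T : H →L[ℂ] H} (hf : (support f).Finite)
    (h : ∀ ξ, HasSum (fun b => f b ξ) (T ξ)) : HasSum f T := by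
  have hs : Summable f := summable_of_hasFiniteSupport hf
  convert hs.hasSum
  ext ξ
  exact (h ξ).unique (hs.hasSum.mapL (ContinuousLinearMap.apply ℂ H ξ))

variable [CompleteSpace H] {p : ι → H →L[ℂ] H}

theorem IsProjection.exists_apply_eq_self_ne_zero {q : H →L[ℂ] H} (hq : IsProjection q)
    (hq0 : q ≠ 0) : ∃ ξ, q ξ = ξ ∧ ξ ≠ 0 := by
  obtain ⟨η, hη⟩ : ∃ η, q η ≠ 0 := by
    by_contra! h
    exact hq0 (ContinuousLinearMap.ext h)
  exact ⟨q η, DFunLike.congr_fun hq.1.eq η, hη⟩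

/-- Nonzero members of an orthogonal family of projections have orthogonal nonzero vectors
in their ranges, which are linearly independent. -/
theorem finite_support_of_isProjection_of_pairwise [FiniteDimensional ℂ H]
    (hp : ∀ b, IsProjection (p b)) (horth : Pairwise fun b c => p b * p c = 0) :
    (support p).Finite := by
  rw [← Set.finite_coe_iff]
  choose ξ hξ hξ0 using fun b : support p => (hp b).exists_apply_eq_self_ne_zero b.2
  refine (linearIndependent_of_ne_zero_of_inner_eq_zero (𝕜 := ℂ) hξ0 fun b c hbc => ?_).finite
  calc ⟪ξ b, ξ c⟫_ℂ = ⟪p b (ξ b), p c (ξ c)⟫_ℂ := by rw [hξ, hξ]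
    _ = ⟪ξ b, (p b * p c) (ξ c)⟫_ℂ := (hp b).2.isSymmetric _ _
    _ = 0 := by rw [horth (Subtype.coe_injective.ne hbc), zero_apply, inner_zero_right]

theorem isProjection_tsum (hp : ∀ b, IsProjection (p b))
    (horth : Pairwise fun b c => p b * p c = 0) (hs : Summable p) :
    IsProjection (∑' b, p b) := by
  refine ⟨?_, ?_⟩
  · rw [IsIdempotentElem, ← hs.tsum_mul_right]
    exact tsum_congr (mul_tsum_eq_self_of_pairwise (fun b => (hp b).1) horth hs)
  · rw [IsSelfAdjoint, tsum_star]
    exact tsum_congr fun b => (hp b).2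

end ProjectionFamily

section QuantumAutomorphism

variable {H : Type*} [NormedAddCommGroup H] [InnerProductSpace ℂ H] [CompleteSpace H]

namespace IsQuantumPermutation

variable {X : Type*} {u : X → X → H →L[ℂ] H}

theorem transpose (hu : IsQuantumPermutation u) : IsQuantumPermutation fun a b => u b a :=
  let ⟨hp, hrow, hcol, hrs, hcs⟩ := hu
  ⟨fun a b => hp b a, hcol, hrow, hcs, hrs⟩

variable [FiniteDimensional ℂ H]

theorem finite_support_row (hu : IsQuantumPermutation u) (a : X) : (support (u a)).Finite :=
  finite_support_of_isProjection_of_pairwise (hu.1 a) fun _ _ => hu.2.1 a _ _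

theorem hasSum_row (hu : IsQuantumPermutation u) (a : X) : HasSum (u a) 1 :=
  hasSum_of_hasSum_apply (hu.finite_support_row a) (hu.2.2.2.1 a)

end IsQuantumPermutation

theorem IsQuantumAut.transpose {V : Type*} {G : SimpleGraph V} {u : V → V → H →L[ℂ] H}
    (hu : IsQuantumAut G u) : IsQuantumAut G fun a b => u b a :=
  ⟨hu.1.transpose, fun a₁ a₂ b₁ b₂ h => hu.2 b₁ b₂ a₁ a₂ fun ⟨h₁, h₂⟩ => h ⟨h₁.symm, h₂.symm⟩⟩

/-- The matrix `g(u)^I` of the paper, with base point `x`. -/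
def blockSum {V I : Type*} (u : V × I → V × I → H →L[ℂ] H) (x : V) (i j : I) : H →L[ℂ] H :=
  ∑' v, u (x, i) (v, j)

namespace IsQuantumAut

variable {V I : Type*} {G : SimpleGraph V} {u : V × I → V × I → H →L[ℂ] H}

theorem mul_eq_zero_of_adj (hu : IsQuantumAut (disjointUnion G I) u) {x x' : V}
    (hxx' : G.Adj x x') (i j : I) (v : V) {b : V × I} (hb : b.2 ≠ j) :
    u (x, i) (v, j) * u (x', i) b = 0 :=
  hu.2 _ _ _ _ fun ⟨_, hadj⟩ => hb (hadj.1 ⟨rfl, hxx'⟩).1.symm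

variable [FiniteDimensional ℂ H]

theorem summable_block (hu : IsQuantumAut (disjointUnion G I) u) (x : V) (i j : I) :
    Summable fun v => u (x, i) (v, j) :=
  summable_of_hasFiniteSupport
    ((hu.1.finite_support_row (x, i)).preimage (Prod.mk_left_injective j).injOn)

theorem isProjection_blockSum (hu : IsQuantumAut (disjointUnion G I) u) (x : V) (i j : I) :
    IsProjection (blockSum u x i j) :=
  isProjection_tsum (fun _ => hu.1.1 _ _)
    (fun _ _ h => hu.1.2.1 _ _ _ ((Prod.mk_left_injective j).ne h)) (hu.summable_block x i j)

theorem mul_blockSum_self (hu : IsQuantumAut (disjointUnion G I) u) (x v : V) (i j : I) :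
    u (x, i) (v, j) * blockSum u x i j = u (x, i) (v, j) :=
  mul_tsum_eq_self_of_pairwise (p := fun w => u (x, i) (w, j)) (fun _ => (hu.1.1 _ _).1)
    (fun _ _ h => hu.1.2.1 _ _ _ ((Prod.mk_left_injective j).ne h)) (hu.summable_block x i j) v

theorem blockSum_mul_of_forall (hu : IsQuantumAut (disjointUnion G I) u) {x : V} {i j : I}
    {q : H →L[ℂ] H} (h : ∀ v, u (x, i) (v, j) * q = u (x, i) (v, j)) :
    blockSum u x i j * q = blockSum u x i j :=
  ((hu.summable_block x i j).tsum_mul_right q).symm.trans (tsum_congr h)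

theorem mul_blockSum_of_forall (hu : IsQuantumAut (disjointUnion G I) u) {x : V} {i j : I}
    {q : H →L[ℂ] H} (h : ∀ v, q * u (x, i) (v, j) = u (x, i) (v, j)) :
    q * blockSum u x i j = blockSum u x i j :=
  ((hu.summable_block x i j).tsum_mul_left q).symm.trans (tsum_congr h)

/-- Across an edge, row `(x', i)` meets `u (x, i) (v, j)` only in column block `j`, so the
row sum `1` of `u` reduces to the block sum. -/
theorem mul_blockSum_of_adj (hu : IsQuantumAut (disjointUnion G I) u) {x x' : V}
    (hxx' : G.Adj x x') (v : V) (i j : I) :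
    u (x, i) (v, j) * blockSum u x' i j = u (x, i) (v, j) :=
  calc u (x, i) (v, j) * blockSum u x' i j
      = ∑' w, u (x, i) (v, j) * u (x', i) (w, j) :=
        ((hu.summable_block x' i j).tsum_mul_left _).symm
    _ = ∑' b, u (x, i) (v, j) * u (x', i) b :=
        tsum_prod_mk_left_eq_tsum fun _ hb => hu.mul_eq_zero_of_adj hxx' i j v hb
    _ = u (x, i) (v, j) * ∑' b, u (x', i) b :=
        (hu.1.hasSum_row (x', i)).summable.tsum_mul_left _
    _ = u (x, i) (v, j) := by rw [(hu.1.hasSum_row (x', i)).tsum_eq, mul_one]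

theorem blockSum_eq_of_adj (hu : IsQuantumAut (disjointUnion G I) u) {x x' : V}
    (hxx' : G.Adj x x') (i j : I) : blockSum u x i j = blockSum u x' i j :=
  calc blockSum u x i j = blockSum u x i j * blockSum u x' i j :=
        (hu.blockSum_mul_of_forall fun v => hu.mul_blockSum_of_adj hxx' v i j).symm
    _ = blockSum u x' i j :=
        (hu.isProjection_blockSum x' i j).2.mul_eq_left_comm (hu.isProjection_blockSum x i j).2
          (hu.blockSum_mul_of_forall fun v => hu.mul_blockSum_of_adj hxx'.symm v i j)

theorem blockSum_eq (hu : IsQuantumAut (disjointUnion G I) u) (hG : G.Connected) (x x' : V)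
    (i j : I) : blockSum u x i j = blockSum u x' i j := by
  obtain ⟨p⟩ := hG.preconnected x x'
  induction p with
  | nil => rfl
  | cons h _ ih => exact (hu.blockSum_eq_of_adj h i j).trans ih

theorem mul_blockSum (hu : IsQuantumAut (disjointUnion G I) u) (hG : G.Connected)
    (x w y : V) (i j : I) : u (w, i) (y, j) * blockSum u x i j = u (w, i) (y, j) := by
  rw [hu.blockSum_eq hG x w]
  exact hu.mul_blockSum_self w y i j

theorem blockSum_mul (hu : IsQuantumAut (disjointUnion G I) u) (hG : G.Connected)
    (x w y : V) (i j : I) : blockSum u x i j * u (w, i) (y, j) = u (w, i) (y, j) :=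
  (hu.1.1 _ _).2.mul_eq_left_comm (hu.isProjection_blockSum x i j).2 (hu.mul_blockSum hG x w y i j)

/-- Both block sums absorb each other's summands, so both equal their product. -/
theorem blockSum_eq_blockSum_transpose (hu : IsQuantumAut (disjointUnion G I) u)
    (hG : G.Connected) (x : V) (i j : I) :
    blockSum u x i j = blockSum (fun a b => u b a) x j i :=
  calc blockSum u x i j = blockSum u x i j * blockSum (fun a b => u b a) x j i :=
        (hu.blockSum_mul_of_forall fun v => hu.transpose.mul_blockSum hG x v x j i).symm
    _ = blockSum (fun a b => u b a) x j i :=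
        hu.transpose.mul_blockSum_of_forall fun v => hu.blockSum_mul hG x v x i j

theorem blockSum_mul_blockSum_eq_zero (hu : IsQuantumAut (disjointUnion G I) u) (x : V)
    (i : I) {j j' : I} (hjj' : j ≠ j') : blockSum u x i j * blockSum u x i j' = 0 :=
  tsum_mul_tsum_eq_zero (hu.summable_block x i j) (hu.summable_block x i j') fun _ _ =>
    hu.1.2.1 _ _ _ fun h => hjj' (congrArg Prod.snd h)

theorem hasSum_blockSum (hu : IsQuantumAut (disjointUnion G I) u) (x : V) (i : I) :
    HasSum (blockSum u x i) 1 :=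
  ((Equiv.prodComm I V).hasSum_iff.2 (hu.1.hasSum_row (x, i))).prod_fiberwise fun j =>
    (hu.summable_block x i j).hasSum

theorem isQuantumPermutation_blockSum (hu : IsQuantumAut (disjointUnion G I) u)
    (hG : G.Connected) (x : V) : IsQuantumPermutation (blockSum u x) := by
  have hT := hu.blockSum_eq_blockSum_transpose hG x
  refine ⟨hu.isProjection_blockSum x, fun i _ _ => hu.blockSum_mul_blockSum_eq_zero x i,
    fun j i i' hii' => ?_, fun i ξ => (hu.hasSum_blockSum x i).mapL (.apply ℂ H ξ),
    fun j ξ => ?_⟩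
  · rw [hT, hT]
    exact hu.transpose.blockSum_mul_blockSum_eq_zero x j hii'
  · simp only [hT]
    exact (hu.transpose.hasSum_blockSum x j).mapL (.apply ℂ H ξ)

end IsQuantumAut

end QuantumAutomorphism

/-- let `X` be a connected graph and `u` a finite dimensional quantum
automorphism of `⋃_{i∈I} X`.  With `g(u)^I_{ij} = Σ_{v} u_{x_i, v_j}`: (a) the sum is
independent of the base point `x`; (b) each `g(u)^I_{ij}` is a projection; (c) `g(u)^I` is a
quantum permutation of `I`; (d) `u_{w_i, y_j} g(u)^I_{ij} = u_{w_i, y_j} = g(u)^I_{ij} u_{w_i, y_j}`. -/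
theorem stmt15 {V I H : Type*} [NormedAddCommGroup H] [InnerProductSpace ℂ H] [CompleteSpace H]
    [FiniteDimensional ℂ H]
    (G : SimpleGraph V) (hG : G.Connected)
    (u : V × I → V × I → H →L[ℂ] H) (hu : IsQuantumAut (disjointUnion G I) u) :
    (∀ (x x' : V) (i j : I),
      (∑' v : V, u (x, i) (v, j)) = ∑' v : V, u (x', i) (v, j)) ∧
    (∀ (x : V) (i j : I), IsProjection (∑' v : V, u (x, i) (v, j))) ∧
    (∀ x : V, IsQuantumPermutation (fun i j : I => ∑' v : V, u (x, i) (v, j))) ∧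
    (∀ (x w y : V) (i j : I),
      u (w, i) (y, j) * (∑' v : V, u (x, i) (v, j)) = u (w, i) (y, j) ∧
      (∑' v : V, u (x, i) (v, j)) * u (w, i) (y, j) = u (w, i) (y, j)) :=
  ⟨hu.blockSum_eq hG, hu.isProjection_blockSum, hu.isQuantumPermutation_blockSum hG,
    fun x w y i j => ⟨hu.mul_blockSum hG x w y i j, hu.blockSum_mul hG x w y i j⟩⟩
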